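/- arXiv:1804.01631 — 3 statements merged into one kernel-verified Lean document; each statement's English description precedes it below -/
import Mathlib

section
/- Suppose Assumptions 1–4 hold and the scale function is specified as s(t) = t or s(t) = exp(t). Then the weighted mean squared prediction error of the MVR solution θ* = (β*,γ*) is bounded by the root mean squared prediction error of OLS: E[(Y−X'β*)²/s(X'γ*)] ≤ E[(Y−X'β_LS)²]^{1/2}, with equality if and only if θ* = θ_LS. -/
open MeasureTheory Filter

noncomputable section

namespace MVR

/-- Lower endpoint of the scale-function domain: `zero` codes `a = 0`, `negInf` codes `a = -∞`. -/
inductive LB | zero | negInf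

/-- The domain `(a, ∞)` of the scale function. -/
def LB.dom : LB → Set ℝ
  | LB.zero => Set.Ioi 0
  | LB.negInf => Set.univ

/-- The filter "t → a from within the domain". -/
def LB.atLB : LB → Filter ℝ
  | LB.zero => nhdsWithin 0 (Set.Ioi 0)
  | LB.negInf => Filter.atBot

/-- Assumption 1: the scale function `s : (a,∞) → (0,∞)` is three times differentiable,
strictly increasing, convex, with `s(t) → 0` as `t → a` and `s(t) → ∞` as `t → ∞`. -/
structure IsScale (A : LB) (s : ℝ → ℝ) : Prop where
  pos : ∀ t ∈ A.dom, 0 < s t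
  smooth : ContDiffOn ℝ 3 s A.dom
  mono : StrictMonoOn s A.dom
  convex : ConvexOn ℝ A.dom s
  tendsto_lb : Filter.Tendsto s A.atLB (nhds 0)
  tendsto_top : Filter.Tendsto s Filter.atTop Filter.atTop

/-- Euclidean inner product on `ℝ^k`. -/
def mdot {k : ℕ} (x y : Fin k → ℝ) : ℝ := ∑ i, x i * y i

/-- Euclidean norm on `ℝ^k`. -/
def ednorm {k : ℕ} (x : Fin k → ℝ) : ℝ := Real.sqrt (∑ i, (x i) ^ 2)

/-- Euclidean norm on `ℝ^k × ℝ^k`. -/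
def pnorm {k : ℕ} (θ : (Fin k → ℝ) × (Fin k → ℝ)) : ℝ :=
  Real.sqrt (∑ i, (θ.1 i) ^ 2 + ∑ i, (θ.2 i) ^ 2)

/-- The vector `(g, 0, …, 0) ∈ ℝ^k`. -/
def lsγ {k : ℕ} [NeZero k] (g : ℝ) : Fin k → ℝ := fun i => if i = 0 then g else 0

/-- Topological support of a measure: points all of whose neighbourhoods have positive measure. -/
def measSupport {α : Type*} [TopologicalSpace α] [MeasurableSpace α] (μ : Measure α) : Set α :=
  {x | ∀ U ∈ nhds x, μ U ≠ 0}

/-- Standard Gaussian density `φ`. -/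
def gaussD (z : ℝ) : ℝ := (Real.sqrt (2 * Real.pi))⁻¹ * Real.exp (-(z ^ 2) / 2)

/-- The MVR setting: a probability space carrying `(Y, X)` with `X` having intercept `1`,
together with a scale function satisfying Assumption 1. -/
structure Setting (k : ℕ) [NeZero k] (Ω : Type*) [MeasurableSpace Ω] where
  P : Measure Ω
  isProb : IsProbabilityMeasure P
  Y : Ω → ℝ
  X : Ω → Fin k → ℝ
  measY : Measurable Y
  measX : Measurable X
  intercept : ∀ᵐ ω ∂P, X ω 0 = 1
  A : LB
  s : ℝ → ℝ
  scale : IsScale A s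

namespace Setting

variable {k : ℕ} [NeZero k] {Ω : Type*} [MeasurableSpace Ω] (S : Setting k Ω)

/-- First derivative of the scale function. -/
def s1 : ℝ → ℝ := deriv S.s

/-- Second derivative of the scale function. -/
def s2 : ℝ → ℝ := deriv (deriv S.s)

/-- Third derivative of the scale function. -/
def s3 : ℝ → ℝ := deriv (deriv (deriv S.s))

/-- The parameter set `Θ_γ = {γ : P[s(X'γ) > 0] = 1}`. -/
def Tγ : Set (Fin k → ℝ) := {γ | ∀ᵐ ω ∂S.P, 0 < S.s (mdot (S.X ω) γ)}

/-- The parameter space `Θ = ℝ^k × Θ_γ`. -/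
def T : Set ((Fin k → ℝ) × (Fin k → ℝ)) := Set.univ ×ˢ S.Tγ

/-- Standardized residual `e(Y,X,θ) = (Y − X'β)/s(X'γ)`. -/
def e (θ : (Fin k → ℝ) × (Fin k → ℝ)) (ω : Ω) : ℝ :=
  (S.Y ω - mdot (S.X ω) θ.1) / S.s (mdot (S.X ω) θ.2)

/-- The MVR loss `L(X,Y,θ) = (1/2){e(Y,X,θ)² + 1}·s(X'γ)`. -/
def L (θ : (Fin k → ℝ) × (Fin k → ℝ)) (ω : Ω) : ℝ :=
  (1 / 2) * ((S.e θ ω) ^ 2 + 1) * S.s (mdot (S.X ω) θ.2)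

/-- The MVR objective `Q(θ) = E[L(X,Y,θ)]`. -/
def Q (θ : (Fin k → ℝ) × (Fin k → ℝ)) : ℝ := ∫ ω, S.L θ ω ∂S.P

/-- The σ-algebra generated by `X`. -/
def mX : MeasurableSpace Ω := MeasurableSpace.comap S.X inferInstance

/-- Conditional mean function `μ(X) = E[Y | X]` (as a function of `ω`). -/
def condMean : Ω → ℝ := S.P[S.Y | S.mX]

/-- Conditional variance function `σ(X)² = E[(Y − E[Y|X])² | X]` (as a function of `ω`). -/
def condVar : Ω → ℝ := S.P[fun ω => (S.Y ω - S.condMean ω) ^ 2 | S.mX]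

/-- Conditional standard deviation `σ(X)`. -/
def condSD (ω : Ω) : ℝ := Real.sqrt (S.condVar ω)

/-- Assumption 2: `σ(X)²` is bounded away from `0` (almost surely) on the support of `X`. -/
def Assm2 : Prop := ∃ c : ℝ, 0 < c ∧ ∀ᵐ ω ∂S.P, c ≤ S.condVar ω

/-- Assumption 3: the moment conditions. -/
def Assm3 : Prop :=
  Integrable (fun ω => (S.Y ω) ^ 4) S.P ∧
  Integrable (fun ω => (ednorm (S.X ω)) ^ 4) S.P ∧
  ∀ γ ∈ S.Tγ,
    Integrable (fun ω => (ednorm (S.X ω)) ^ 4 * (S.s2 (mdot (S.X ω) γ)) ^ 2) S.P ∧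
    Integrable (fun ω => (ednorm (S.X ω)) ^ 6 * (S.s3 (mdot (S.X ω) γ)) ^ 2) S.P ∧
    Integrable (fun ω =>
      (ednorm (S.X ω)) ^ 6 * (S.s1 (mdot (S.X ω) γ)) ^ 2 * (S.s2 (mdot (S.X ω) γ)) ^ 2) S.P

/-- The matrix `E[XX'/s(X'γ)]`. -/
def M (γ : Fin k → ℝ) : Matrix (Fin k) (Fin k) ℝ :=
  Matrix.of fun i j => ∫ ω, S.X ω i * S.X ω j / S.s (mdot (S.X ω) γ) ∂S.P

/-- Assumption 4: `E[XX'/s(X'γ)]` is nonsingular for all `γ ∈ Θ_γ`. -/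
def Assm4 : Prop := ∀ γ ∈ S.Tγ, (S.M γ).det ≠ 0

/-- The restricted (constant-scale) MVR objective defining OLS. -/
def QLS (β : Fin k → ℝ) (g : ℝ) : ℝ :=
  ∫ ω, (1 / 2) * (((S.Y ω - mdot (S.X ω) β) / S.s g) ^ 2 + 1) * S.s g ∂S.P

/-- `(β, g)` is the OLS solution: it minimizes the constant-scale MVR objective over
`Θ_LS = ℝ^k × {g : s(g) > 0}`. -/
def IsOLS (β : Fin k → ℝ) (g : ℝ) : Prop :=
  0 < S.s g ∧ ∀ β' : Fin k → ℝ, ∀ g' : ℝ, 0 < S.s g' → S.QLS β g ≤ S.QLS β' g'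

/-- `θ` is the unique minimizer of the MVR objective `Q` over `Θ`. -/
def IsMVRmin (θ : (Fin k → ℝ) × (Fin k → ℝ)) : Prop :=
  θ ∈ S.T ∧ ∀ θ' ∈ S.T, θ' ≠ θ → S.Q θ < S.Q θ'

/-- The scale function is specified as `s(t) = t` or `s(t) = exp(t)`. -/
def LinOrExp : Prop := (∀ t, S.s t = t) ∨ (∀ t, S.s t = Real.exp t)

/-- The scaled Gaussian density `f_θ(Y,X) = φ(e(Y,X,θ))/s(X'γ)`. -/
def fdens (θ : (Fin k → ℝ) × (Fin k → ℝ)) (ω : Ω) : ℝ :=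
  gaussD (S.e θ ω) / S.s (mdot (S.X ω) θ.2)

/-- The GLS reference density `f†_β(Y,X) = φ((Y−X'β)/σ(X))/σ(X)`. -/
def fdagger (β : Fin k → ℝ) (ω : Ω) : ℝ :=
  gaussD ((S.Y ω - mdot (S.X ω) β) / S.condSD ω) / S.condSD ω

/-- The infeasible MVR objective written in terms of `μ(X)` and `σ(X)²`. -/
def Qtilde (θ : (Fin k → ℝ) × (Fin k → ℝ)) : ℝ :=
  (1 / 2) * ∫ ω, (((S.condMean ω - mdot (S.X ω) θ.1) / S.s (mdot (S.X ω) θ.2)) ^ 2 + 1) *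
      S.s (mdot (S.X ω) θ.2) ∂S.P +
  (1 / 2) * ∫ ω, S.condVar ω / S.s (mdot (S.X ω) θ.2) ∂S.P

/-- The block matrix `Ψ(θ)` of Lemma 2. -/
def Psi (θ : (Fin k → ℝ) × (Fin k → ℝ)) : Matrix (Fin k ⊕ Fin k) (Fin k ⊕ Fin k) ℝ :=
  Matrix.fromBlocks
    (Matrix.of fun i j => ∫ ω, S.X ω i * S.X ω j / S.s (mdot (S.X ω) θ.2) ∂S.P)
    (Matrix.of fun i j => ∫ ω,
      S.X ω i * S.X ω j * S.s1 (mdot (S.X ω) θ.2) * S.e θ ω / S.s (mdot (S.X ω) θ.2) ∂S.P)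
    (Matrix.of fun i j => ∫ ω,
      S.X ω i * S.X ω j * S.s1 (mdot (S.X ω) θ.2) * S.e θ ω / S.s (mdot (S.X ω) θ.2) ∂S.P)
    (Matrix.of fun i j => ∫ ω,
      S.X ω i * S.X ω j * (S.s1 (mdot (S.X ω) θ.2) * S.e θ ω) ^ 2 / S.s (mdot (S.X ω) θ.2) ∂S.P)

end Setting

end MVR

open MVR MVR.Setting

/-! For `s(t) = t` or `s(t) = exp(t)` every rescaling `c • s(X'γ)`, `c > 0`, is again of the form
`s(X'γ')` (take `γ' = c • γ`, resp. shift the intercept coordinate of `γ` by `log c`). Along this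
ray the objective is `A / (2c) + c B / 2` with `A = E[(Y - X'β)² / s(X'γ)]` and `B = E[s(X'γ)]`,
so optimality at `c = 1` forces `A = B`, i.e. `Q(θ*) = A`. The same argument for the constant-scale
problem gives `Q(θ_LS) = s(γ_LS) = E[(Y - X'β_LS)²]^{1/2}`, and the claim becomes
`Q(θ*) ≤ Q(θ_LS)`, with equality only at the unique minimiser. -/

namespace MVR

section Rescaling

variable {α : Type*} [MeasurableSpace α] {μ : Measure α} {u v : α → ℝ}

lemma eq_of_forall_add_le_div_add_mul {a b : ℝ} (ha : 0 ≤ a) (hb : 0 ≤ b)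
    (h : ∀ c > 0, a + b ≤ a / c + c * b) : a = b := by
  -- at `c = (a + 1) / (b + 1)` the right side falls short of `a + b` by `(a - b)² / ((a + 1)(b + 1))`
  have key := h ((a + 1) / (b + 1)) (by positivity)
  rw [div_div_eq_mul_div, div_mul_eq_mul_div, div_add_div _ _ (by positivity) (by positivity),
    le_div_iff₀ (by positivity)] at key
  nlinarith [sq_nonneg (a - b), mul_nonneg ha hb]

/-- The MVR objective along the ray `c ↦ c • s` of scales: with `u = r² / s` and `v = s`,
`(1/2)((r / (c s))² + 1) (c s) = u / (2c) + c v / 2`. -/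
def rescaledMean (μ : Measure α) (u v : α → ℝ) (c : ℝ) : ℝ :=
  ∫ ω, (u ω / (2 * c) + c * v ω / 2) ∂μ

lemma rescaledMean_eq (hu : Integrable u μ) (hv : Integrable v μ) (c : ℝ) :
    rescaledMean μ u v c = (∫ ω, u ω ∂μ) / (2 * c) + c * (∫ ω, v ω ∂μ) / 2 := by
  rw [rescaledMean, integral_add (hu.div_const _) ((hv.const_mul c).div_const 2), integral_div,
    integral_div, integral_const_mul]

lemma rescaledMean_eq_zero_of_not_integrable (hu : AEStronglyMeasurable u μ)
    (hu0 : 0 ≤ᵐ[μ] u) (hv0 : 0 ≤ᵐ[μ] v) (h : ¬(Integrable u μ ∧ Integrable v μ))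
    {c : ℝ} (hc : 0 < c) : rescaledMean μ u v c = 0 := by
  refine integral_undef fun hint => h ?_
  have hnonneg : ∀ᵐ ω ∂μ, 0 ≤ u ω / (2 * c) ∧ 0 ≤ c * v ω / 2 := by
    filter_upwards [hu0, hv0] with ω hω hω'
    exact ⟨div_nonneg hω (by positivity), div_nonneg (mul_nonneg hc.le hω') two_pos.le⟩
  obtain ⟨hu', hv'⟩ := (integrable_add_iff_of_nonneg (f := fun ω => u ω / (2 * c))
    (g := fun ω => c * v ω / 2) (by fun_prop) (hnonneg.mono fun _ h => h.1)
    (hnonneg.mono fun _ h => h.2)).1 hint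
  refine ⟨(hu'.mul_const (2 * c)).congr (ae_of_all _ fun ω => ?_),
    (hv'.mul_const (2 / c)).congr (ae_of_all _ fun ω => ?_)⟩ <;> field_simp

lemma integral_eq_of_forall_rescaledMean_one_le (hu : Integrable u μ) (hv : Integrable v μ)
    (hu0 : 0 ≤ᵐ[μ] u) (hv0 : 0 ≤ᵐ[μ] v)
    (h : ∀ c > 0, rescaledMean μ u v 1 ≤ rescaledMean μ u v c) :
    ∫ ω, u ω ∂μ = ∫ ω, v ω ∂μ := by
  refine eq_of_forall_add_le_div_add_mul (integral_nonneg_of_ae hu0) (integral_nonneg_of_ae hv0)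
    fun c hc => ?_
  have := h c hc
  rw [rescaledMean_eq hu hv, rescaledMean_eq hu hv] at this
  field_simp at this ⊢
  linarith

lemma rescaledMean_one_eq_integral (hu : AEStronglyMeasurable u μ) (hu0 : 0 ≤ᵐ[μ] u)
    (hv0 : 0 ≤ᵐ[μ] v) (h : ∀ c > 0, c ≠ 1 → rescaledMean μ u v 1 < rescaledMean μ u v c) :
    rescaledMean μ u v 1 = ∫ ω, u ω ∂μ := by
  have hint : Integrable u μ ∧ Integrable v μ := by
    by_contra hnot
    have := h 2 two_pos (by norm_num)
    rw [rescaledMean_eq_zero_of_not_integrable hu hu0 hv0 hnot one_pos,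
      rescaledMean_eq_zero_of_not_integrable hu hu0 hv0 hnot two_pos] at this
    exact this.false
  have huv := integral_eq_of_forall_rescaledMean_one_le hint.1 hint.2 hu0 hv0 fun c hc =>
    (eq_or_ne c 1).elim (fun hc1 => hc1 ▸ le_rfl) fun hc1 => (h c hc hc1).le
  rw [rescaledMean_eq hint.1 hint.2, ← huv]
  ring

end Rescaling

lemma memLp_two_of_integrable_pow_four {α : Type*} [MeasurableSpace α] {μ : Measure α}
    [IsFiniteMeasure μ] {f : α → ℝ} (hf : AEStronglyMeasurable f μ)
    (h : Integrable (fun x => f x ^ 4) μ) : MemLp f 2 μ := by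
  refine (memLp_two_iff_integrable_sq hf).2 <| (h.add (integrable_const 1)).mono' (by fun_prop)
    (ae_of_all _ fun x => ?_)
  rw [Real.norm_of_nonneg (sq_nonneg _), Pi.add_apply]
  nlinarith [sq_nonneg (f x ^ 2 - 1)]

lemma mdot_eq_dotProduct {k : ℕ} (x y : Fin k → ℝ) : mdot x y = x ⬝ᵥ y := rfl

lemma abs_mdot_le_ednorm_mul_ednorm {k : ℕ} (x y : Fin k → ℝ) :
    |mdot x y| ≤ ednorm x * ednorm y := by
  rw [ednorm, ednorm, ← Real.sqrt_mul (Finset.sum_nonneg fun i _ => sq_nonneg _),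
    ← Real.sqrt_sq_eq_abs]
  exact Real.sqrt_le_sqrt (Finset.sum_mul_sq_le_sq_mul_sq _ _ _)

lemma mdot_lsγ {k : ℕ} [NeZero k] (x : Fin k → ℝ) (g : ℝ) : mdot x (lsγ g) = x 0 * g := by
  simp [mdot, lsγ]

namespace Setting

variable {k : ℕ} [NeZero k] {Ω : Type*} [MeasurableSpace Ω] {S : Setting k Ω}

instance (S : Setting k Ω) : IsProbabilityMeasure S.P := S.isProb

variable (S) in
lemma measurable_mdot (γ : Fin k → ℝ) : Measurable fun ω => mdot (S.X ω) γ := by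
  have := S.measX
  simp only [mdot]
  fun_prop

lemma LinOrExp.continuous (hs : S.LinOrExp) : Continuous S.s := by
  rcases hs with h | h <;> rw [funext h] <;> fun_prop

lemma LinOrExp.exists_eq_mul (hs : S.LinOrExp) {c : ℝ} (hc : 0 < c) (t : ℝ) :
    ∃ t', S.s t' = c * S.s t := by
  rcases hs with h | h
  · exact ⟨c * t, by rw [h, h]⟩
  · exact ⟨t + Real.log c, by rw [h, h, Real.exp_add, Real.exp_log hc, mul_comm]⟩

lemma LinOrExp.exists_ae_eq_mul (hs : S.LinOrExp) {c : ℝ} (hc : 0 < c) (γ : Fin k → ℝ) :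
    ∃ γ', ∀ᵐ ω ∂S.P, S.s (mdot (S.X ω) γ') = c * S.s (mdot (S.X ω) γ) := by
  rcases hs with h | h
  · refine ⟨c • γ, ae_of_all _ fun ω => ?_⟩
    rw [h, h, mdot_eq_dotProduct, dotProduct_smul, smul_eq_mul, mdot_eq_dotProduct]
  · refine ⟨γ + lsγ (Real.log c), ?_⟩
    filter_upwards [S.intercept] with ω h1
    rw [h, h, mdot_eq_dotProduct, dotProduct_add, ← mdot_eq_dotProduct, ← mdot_eq_dotProduct,
      mdot_lsγ, h1, one_mul, Real.exp_add, Real.exp_log hc, mul_comm]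

lemma Assm3.integrable_residual_sq (h3 : S.Assm3) (β : Fin k → ℝ) :
    Integrable (fun ω => (S.Y ω - mdot (S.X ω) β) ^ 2) S.P := by
  have hY : MemLp S.Y 2 S.P :=
    memLp_two_of_integrable_pow_four S.measY.aestronglyMeasurable h3.1
  have hX : MemLp (fun ω => ednorm (S.X ω)) 2 S.P :=
    memLp_two_of_integrable_pow_four (by unfold ednorm; have := S.measX; fun_prop) h3.2.1
  have hXβ : MemLp (fun ω => mdot (S.X ω) β) 2 S.P := by
    refine (hX.mul_const (ednorm β)).of_le (S.measurable_mdot β).aestronglyMeasurable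
      (ae_of_all _ fun ω => ?_)
    rw [Real.norm_eq_abs]
    exact (abs_mdot_le_ednorm_mul_ednorm _ _).trans (le_abs_self _)
  exact (hY.sub hXβ).integrable_sq

lemma Q_eq_rescaledMean {β γ γ' : Fin k → ℝ} {c : ℝ} (hc : c ≠ 0) (hγ : γ ∈ S.Tγ)
    (hγ' : ∀ᵐ ω ∂S.P, S.s (mdot (S.X ω) γ') = c * S.s (mdot (S.X ω) γ)) :
    S.Q (β, γ') = rescaledMean S.P (fun ω => (S.Y ω - mdot (S.X ω) β) ^ 2 / S.s (mdot (S.X ω) γ))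
      (fun ω => S.s (mdot (S.X ω) γ)) c := by
  refine integral_congr_ae ?_
  filter_upwards [hγ, hγ'] with ω hpos hω
  simp only [L, e, hω]
  field_simp

lemma IsMVRmin.Q_eq_integral (hs : S.LinOrExp) {θ : (Fin k → ℝ) × (Fin k → ℝ)}
    (hθ : S.IsMVRmin θ) :
    S.Q θ = ∫ ω, (S.Y ω - mdot (S.X ω) θ.1) ^ 2 / S.s (mdot (S.X ω) θ.2) ∂S.P := by
  obtain ⟨β, γ⟩ := θ
  have hγ : ∀ᵐ ω ∂S.P, 0 < S.s (mdot (S.X ω) γ) := hθ.1.2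
  have hQ1 := Q_eq_rescaledMean (β := β) one_ne_zero hγ (ae_of_all _ fun _ => (one_mul _).symm)
  have hmeas := hs.continuous.measurable.comp (S.measurable_mdot γ)
  rw [hQ1]
  refine rescaledMean_one_eq_integral
    (((S.measY.sub (S.measurable_mdot β)).pow_const 2).div hmeas).aestronglyMeasurable
    (hγ.mono fun ω h => div_nonneg (sq_nonneg _) h.le) (hγ.mono fun ω h => h.le)
    fun c hc hc1 => ?_
  obtain ⟨γ', hγ'⟩ := hs.exists_ae_eq_mul hc γ
  have hγ'mem : γ' ∈ S.Tγ := by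
    filter_upwards [hγ, hγ'] with ω hpos hω
    rw [hω]
    positivity
  have hne : (β, γ') ≠ (β, γ) := by
    rintro ⟨⟩
    obtain ⟨ω, hpos, hω⟩ := (hγ.and hγ').exists
    exact hc1 (by simpa [hpos.ne'] using (mul_left_eq_self₀.1 hω.symm))
  rw [← hQ1, ← Q_eq_rescaledMean hc.ne' hγ hγ']
  exact hθ.2 _ ⟨Set.mem_univ _, hγ'mem⟩ hne

lemma IsMVRmin.Q_le {θ θ' : (Fin k → ℝ) × (Fin k → ℝ)} (hθ : S.IsMVRmin θ) (hθ' : θ' ∈ S.T) :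
    S.Q θ ≤ S.Q θ' := by
  rcases eq_or_ne θ' θ with rfl | hne
  · exact le_rfl
  · exact (hθ.2 θ' hθ' hne).le

lemma IsMVRmin.Q_eq_iff {θ θ' : (Fin k → ℝ) × (Fin k → ℝ)} (hθ : S.IsMVRmin θ)
    (hθ' : θ' ∈ S.T) : S.Q θ = S.Q θ' ↔ θ = θ' := by
  exact ⟨fun h => by_contra fun hne => (hθ.2 θ' hθ' (Ne.symm hne)).ne h, fun h => h ▸ rfl⟩

lemma QLS_eq_rescaledMean (β : Fin k → ℝ) {g g' c : ℝ} (hc : c ≠ 0) (hg : S.s g ≠ 0)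
    (hg' : S.s g' = c * S.s g) :
    S.QLS β g' = rescaledMean S.P (fun ω => (S.Y ω - mdot (S.X ω) β) ^ 2 / S.s g)
      (fun _ => S.s g) c := by
  refine integral_congr_ae (ae_of_all _ fun ω => ?_)
  simp only [hg']
  field_simp

lemma IsOLS.QLS_eq_sqrt (h3 : S.Assm3) (hs : S.LinOrExp) {β : Fin k → ℝ} {g : ℝ}
    (hLS : S.IsOLS β g) :
    S.QLS β g = Real.sqrt (∫ ω, (S.Y ω - mdot (S.X ω) β) ^ 2 ∂S.P) := by
  have hg := hLS.1
  have hu := (h3.integrable_residual_sq β).div_const (S.s g)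
  have hv : Integrable (fun _ => S.s g) S.P := integrable_const _
  have hQ1 := QLS_eq_rescaledMean β one_ne_zero hg.ne' (one_mul _).symm
  -- the OLS scale is optimal along `c ↦ c • s(g)`, so both terms of the objective balance
  have hbal := integral_eq_of_forall_rescaledMean_one_le hu hv
    (ae_of_all _ fun ω => div_nonneg (sq_nonneg _) hg.le) (ae_of_all _ fun _ => hg.le)
    fun c hc => by
      obtain ⟨g', hg'⟩ := hs.exists_eq_mul hc g
      rw [← hQ1, ← QLS_eq_rescaledMean β hc.ne' hg.ne' hg']
      exact hLS.2 β g' (hg' ▸ mul_pos hc hg)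
  rw [integral_div, integral_const, probReal_univ, one_smul, div_eq_iff hg.ne'] at hbal
  rw [hQ1, rescaledMean_eq hu hv, integral_div, hbal, integral_const, probReal_univ, one_smul,
    ← sq, Real.sqrt_sq hg.le]
  field_simp
  ring

lemma Q_lsγ (β : Fin k → ℝ) (g : ℝ) : S.Q (β, lsγ g) = S.QLS β g := by
  refine integral_congr_ae ?_
  filter_upwards [S.intercept] with ω h
  simp only [L, e, mdot_lsγ, h, one_mul]

end Setting

end MVR

theorem stmt_5_general {k : ℕ} [NeZero k] {Ω : Type*} [MeasurableSpace Ω] (S : MVR.Setting k Ω)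
    (h3 : S.Assm3) (hs : S.LinOrExp)
    (θstar : (Fin k → ℝ) × (Fin k → ℝ)) (hstar : S.IsMVRmin θstar)
    (βLS : Fin k → ℝ) (gLS : ℝ) (hLS : S.IsOLS βLS gLS)
    (hmem : (βLS, lsγ gLS) ∈ S.T) :
    (∫ ω, (S.Y ω - mdot (S.X ω) θstar.1) ^ 2 / S.s (mdot (S.X ω) θstar.2) ∂S.P ≤
      Real.sqrt (∫ ω, (S.Y ω - mdot (S.X ω) βLS) ^ 2 ∂S.P)) ∧
    ((∫ ω, (S.Y ω - mdot (S.X ω) θstar.1) ^ 2 / S.s (mdot (S.X ω) θstar.2) ∂S.P =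
      Real.sqrt (∫ ω, (S.Y ω - mdot (S.X ω) βLS) ^ 2 ∂S.P)) ↔ θstar = (βLS, lsγ gLS)) := by
  rw [← hstar.Q_eq_integral hs, ← hLS.QLS_eq_sqrt h3 hs, ← Q_lsγ]
  exact ⟨hstar.Q_le hmem, hstar.Q_eq_iff hmem⟩

/-- Corollary 1: for the linear or exponential scale specification, the weighted mean squared
MVR prediction error is bounded by the OLS root mean squared prediction error. -/
theorem stmt_5 {k : ℕ} [NeZero k] {Ω : Type*} [MeasurableSpace Ω] (S : MVR.Setting k Ω)
    (h2 : S.Assm2) (h3 : S.Assm3) (h4 : S.Assm4) (hs : S.LinOrExp)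
    (θstar : (Fin k → ℝ) × (Fin k → ℝ)) (hstar : S.IsMVRmin θstar)
    (βLS : Fin k → ℝ) (gLS : ℝ) (hLS : S.IsOLS βLS gLS)
    (hmem : (βLS, lsγ gLS) ∈ S.T) :
    (∫ ω, (S.Y ω - mdot (S.X ω) θstar.1) ^ 2 / S.s (mdot (S.X ω) θstar.2) ∂S.P ≤
      Real.sqrt (∫ ω, (S.Y ω - mdot (S.X ω) βLS) ^ 2 ∂S.P)) ∧
    ((∫ ω, (S.Y ω - mdot (S.X ω) θstar.1) ^ 2 / S.s (mdot (S.X ω) θstar.2) ∂S.P =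
      Real.sqrt (∫ ω, (S.Y ω - mdot (S.X ω) βLS) ^ 2 ∂S.P)) ↔ θstar = (βLS, lsγ gLS)) :=
  stmt_5_general S h3 hs θstar hstar βLS gLS hLS hmem
end
end

section
/- Suppose Assumptions 1–4 hold and the scale function is specified as s(t) = t or s(t) = exp(t). Then the optimal value of the MVR objective satisfies Q(θ*) = E[s(X'γ*)] = E[e(Y,X,θ*)²·s(X'γ*)], where θ* = (β*,γ*) is the unique minimizer of Q over Θ; moreover, for the OLS solution (constant scale), Q(θ_LS) = E[(Y−X'β_LS)²]^{1/2}. -/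
open MeasureTheory Filter

noncomputable section

open MVR MVR.Setting

section Aux

lemma mdot_lsg {k : ℕ} [NeZero k] (x : Fin k → ℝ) (g : ℝ) : mdot x (lsγ g) = x 0 * g := by
  simp [mdot, lsγ, mul_ite, Finset.sum_ite_eq']

lemma mdot_smul {k : ℕ} (x : Fin k → ℝ) (t : ℝ) (γ : Fin k → ℝ) :
    mdot x (t • γ) = t * mdot x γ := by
  unfold mdot
  rw [Finset.mul_sum]
  refine Finset.sum_congr rfl fun i _ => ?_
  simp [Pi.smul_apply, smul_eq_mul]; ring

lemma mdot_add {k : ℕ} (x : Fin k → ℝ) (γ δ : Fin k → ℝ) :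
    mdot x (γ + δ) = mdot x γ + mdot x δ := by
  simp [mdot, mul_add, Finset.sum_add_distrib]

lemma mdot_zero {k : ℕ} (x : Fin k → ℝ) : mdot x (0 : Fin k → ℝ) = 0 := by
  simp [mdot]

lemma measurable_mdot {k : ℕ} {Ω : Type*} [MeasurableSpace Ω] {X : Ω → Fin k → ℝ}
    (hX : Measurable X) (γ : Fin k → ℝ) : Measurable fun ω => mdot (X ω) γ := by
  unfold mdot
  exact Finset.measurable_sum _ fun i _ => ((measurable_pi_apply i).comp hX).mul_const _

end Aux

/-- Optimal values of the MVR objective for the linear and exponential scale specifications: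
`Q(θ*) = E[s(X'γ*)] = E[e²s(X'γ*)]` and `Q(θ_LS) = E[(Y − X'β_LS)²]^{1/2}`. -/
theorem stmt_18 {k : ℕ} [NeZero k] {Ω : Type*} [MeasurableSpace Ω] (S : MVR.Setting k Ω)
    (h2 : S.Assm2) (h3 : S.Assm3) (h4 : S.Assm4) (hs : S.LinOrExp)
    (θstar : (Fin k → ℝ) × (Fin k → ℝ)) (hstar : S.IsMVRmin θstar)
    (βLS : Fin k → ℝ) (gLS : ℝ) (hLS : S.IsOLS βLS gLS)
    (hmem : (βLS, lsγ gLS) ∈ S.T) :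
    S.Q θstar = ∫ ω, S.s (mdot (S.X ω) θstar.2) ∂S.P ∧
    S.Q θstar = ∫ ω, (S.e θstar ω) ^ 2 * S.s (mdot (S.X ω) θstar.2) ∂S.P ∧
    S.Q (βLS, lsγ gLS) = Real.sqrt (∫ ω, (S.Y ω - mdot (S.X ω) βLS) ^ 2 ∂S.P) := by
  classical
  haveI : IsProbabilityMeasure S.P := S.isProb
  obtain ⟨hT, hmin⟩ := hstar
  have hspos : ∀ᵐ ω ∂S.P, 0 < S.s (mdot (S.X ω) θstar.2) := hT.2
  -- measurability facts
  have hsmeas : Measurable S.s := by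
    rcases hs with h | h
    · rw [show S.s = fun t => t from funext h]; exact measurable_id
    · rw [show S.s = fun t => Real.exp t from funext h]; exact Real.measurable_exp
  have hmX : ∀ γ : Fin k → ℝ, Measurable fun ω => mdot (S.X ω) γ :=
    fun γ => measurable_mdot S.measX γ
  have hmE : ∀ θ, Measurable (S.e θ) := fun θ =>
    (S.measY.sub (hmX θ.1)).div (hsmeas.comp (hmX θ.2))
  have hmL : ∀ θ, Measurable (S.L θ) := fun θ =>
    ((((hmE θ).pow_const 2).add measurable_const).const_mul (1/2)).mul (hsmeas.comp (hmX θ.2))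
  -- the scaling family
  have hfam : ∀ t : ℝ, 0 < t → ∃ γt : Fin k → ℝ,
      (∀ᵐ ω ∂S.P, S.s (mdot (S.X ω) γt) = t * S.s (mdot (S.X ω) θstar.2)) ∧
      (t ≠ 1 → γt ≠ θstar.2) := by
    intro t ht
    rcases hs with hlin | hexp
    · refine ⟨t • θstar.2, ?_, ?_⟩
      · filter_upwards with ω
        rw [hlin, hlin, mdot_smul]
      · intro ht1 hcon
        have hγne : θstar.2 ≠ 0 := by
          intro h0
          have hne : (MeasureTheory.ae S.P).NeBot :=
            MeasureTheory.ae_neBot.mpr (IsProbabilityMeasure.ne_zero S.P)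
          obtain ⟨ω, hω⟩ := hspos.exists
          rw [h0, mdot_zero, hlin] at hω
          exact lt_irrefl 0 hω
        obtain ⟨i, hi⟩ := Function.ne_iff.mp hγne
        have := congrFun hcon i
        simp only [Pi.smul_apply, smul_eq_mul, Pi.zero_apply] at this hi
        have ht1' : (t - 1) * θstar.2 i = 0 := by linarith [this]
        rcases mul_eq_zero.mp ht1' with h | h
        · exact ht1 (by linarith)
        · exact hi h
    · refine ⟨θstar.2 + lsγ (Real.log t), ?_, ?_⟩
      · filter_upwards [S.intercept] with ω h1
        rw [hexp, hexp, mdot_add, mdot_lsg, h1, one_mul, Real.exp_add, Real.exp_log ht]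
        ring
      · intro ht1 hcon
        have := congrFun hcon 0
        simp only [Pi.add_apply, lsγ, if_pos rfl, add_eq_left] at this
        have : t = 1 := by
          have := Real.exp_log ht
          rw [‹Real.log t = 0›] at this
          simpa [Real.exp_zero] using this.symm
        exact ht1 this
  -- membership of scaled parameters
  have hmemT : ∀ (t : ℝ) (γt : Fin k → ℝ), 0 < t →
      (∀ᵐ ω ∂S.P, S.s (mdot (S.X ω) γt) = t * S.s (mdot (S.X ω) θstar.2)) →
      (θstar.1, γt) ∈ S.T := by
    intro t γt ht haeq
    refine Set.mem_prod.mpr ⟨trivial, ?_⟩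
    show ∀ᵐ ω ∂S.P, 0 < S.s (mdot (S.X ω) γt)
    filter_upwards [haeq, hspos] with ω h1 h2
    rw [h1]; exact mul_pos ht h2
  -- the loss along the family
  have hLeq : ∀ (t : ℝ) (γt : Fin k → ℝ), 0 < t →
      (∀ᵐ ω ∂S.P, S.s (mdot (S.X ω) γt) = t * S.s (mdot (S.X ω) θstar.2)) →
      S.L (θstar.1, γt) =ᵐ[S.P] fun ω =>
        ((S.e θstar ω)^2 * S.s (mdot (S.X ω) θstar.2) / t
          + t * S.s (mdot (S.X ω) θstar.2)) / 2 := by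
    intro t γt ht haeq
    filter_upwards [haeq, hspos] with ω h1 h2
    simp only [Setting.L, Setting.e, h1]
    field_simp
  have hLstar_eq : S.L θstar = fun ω =>
      ((S.e θstar ω)^2 * S.s (mdot (S.X ω) θstar.2) + S.s (mdot (S.X ω) θstar.2)) / 2 := by
    funext ω; simp only [Setting.L]; ring
  have hfg_nonneg : ∀ᵐ ω ∂S.P,
      0 ≤ (S.e θstar ω)^2 * S.s (mdot (S.X ω) θstar.2) ∧
      0 ≤ S.s (mdot (S.X ω) θstar.2) := by
    filter_upwards [hspos] with ω h
    exact ⟨mul_nonneg (sq_nonneg _) h.le, h.le⟩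
  -- integrability of the MVR loss at the minimizer
  have hLint : Integrable (S.L θstar) S.P := by
    by_contra hni
    obtain ⟨γ2, he2, hne2⟩ := hfam 2 (by norm_num)
    obtain ⟨γh, heh, hneh⟩ := hfam (1/2) (by norm_num)
    have hbad : ¬ Integrable (S.L (θstar.1, γ2)) S.P ∨
        ¬ Integrable (S.L (θstar.1, γh)) S.P := by
      by_contra hcon
      push_neg at hcon
      obtain ⟨hi2, hih⟩ := hcon
      apply hni
      refine (hi2.add hih).mono' (hmL θstar).aestronglyMeasurable ?_
      filter_upwards [hLeq 2 γ2 (by norm_num) he2, hLeq (1/2) γh (by norm_num) heh,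
        hfg_nonneg] with ω e2 eh hnn
      rw [congrFun hLstar_eq ω, Pi.add_apply, e2, eh, Real.norm_eq_abs,
        abs_of_nonneg (by linarith [hnn.1, hnn.2])]
      obtain ⟨hf0, hg0⟩ := hnn
      linarith
    have hcontra : ∀ (γt : Fin k → ℝ) (t : ℝ), 0 < t → t ≠ 1 →
        (∀ᵐ ω ∂S.P, S.s (mdot (S.X ω) γt) = t * S.s (mdot (S.X ω) θstar.2)) →
        (t ≠ 1 → γt ≠ θstar.2) → ¬ Integrable (S.L (θstar.1, γt)) S.P → False := by
      intro γt t ht ht1 haeq hneγ hbadint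
      have hQt0 : S.Q (θstar.1, γt) = 0 := integral_undef hbadint
      have hQ0 : S.Q θstar = 0 := integral_undef hni
      have hne : (θstar.1, γt) ≠ θstar := fun h => (hneγ ht1) (congrArg Prod.snd h)
      have := hmin _ (hmemT t γt ht haeq) hne
      rw [hQt0, hQ0] at this
      exact lt_irrefl _ this
    rcases hbad with hb | hb
    · exact hcontra γ2 2 (by norm_num) (by norm_num) he2 hne2 hb
    · exact hcontra γh (1/2) (by norm_num) (by norm_num) heh hneh hb
  -- integrability of the two pieces
  have hfgint : Integrable (fun ω =>
      (S.e θstar ω)^2 * S.s (mdot (S.X ω) θstar.2) + S.s (mdot (S.X ω) θstar.2)) S.P := by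
    have heq : (fun ω =>
        (S.e θstar ω)^2 * S.s (mdot (S.X ω) θstar.2) + S.s (mdot (S.X ω) θstar.2))
        = fun ω => 2 * S.L θstar ω := by
      funext ω; rw [congrFun hLstar_eq ω]; ring
    rw [heq]; exact hLint.const_mul 2
  have hfint : Integrable (fun ω => (S.e θstar ω)^2 * S.s (mdot (S.X ω) θstar.2)) S.P := by
    refine hfgint.mono' (((hmE θstar).pow_const 2).mul
      (hsmeas.comp (hmX θstar.2))).aestronglyMeasurable ?_
    filter_upwards [hfg_nonneg] with ω hnn
    rw [Real.norm_eq_abs, abs_of_nonneg hnn.1]; linarith [hnn.2]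
  have hgint : Integrable (fun ω => S.s (mdot (S.X ω) θstar.2)) S.P := by
    refine hfgint.mono' (hsmeas.comp (hmX θstar.2)).aestronglyMeasurable ?_
    filter_upwards [hfg_nonneg] with ω hnn
    rw [Real.norm_eq_abs, abs_of_nonneg hnn.2]; linarith [hnn.1]
  set A := ∫ ω, (S.e θstar ω)^2 * S.s (mdot (S.X ω) θstar.2) ∂S.P with hAdef
  set B := ∫ ω, S.s (mdot (S.X ω) θstar.2) ∂S.P with hBdef
  have hA0 : 0 ≤ A := integral_nonneg_of_ae (hfg_nonneg.mono fun ω h => h.1)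
  have hB0 : 0 ≤ B := integral_nonneg_of_ae (hfg_nonneg.mono fun ω h => h.2)
  have hQstar : S.Q θstar = (A + B)/2 := by
    show (∫ ω, S.L θstar ω ∂S.P) = _
    rw [hLstar_eq]
    rw [show (fun ω => ((S.e θstar ω)^2 * S.s (mdot (S.X ω) θstar.2)
          + S.s (mdot (S.X ω) θstar.2)) / 2)
        = fun ω => (1/2 : ℝ) * ((S.e θstar ω)^2 * S.s (mdot (S.X ω) θstar.2))
          + (1/2 : ℝ) * S.s (mdot (S.X ω) θstar.2) from funext fun ω => by ring]
    rw [integral_add (hfint.const_mul _) (hgint.const_mul _), integral_const_mul,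
      integral_const_mul, ← hAdef, ← hBdef]
    ring
  have hQt : ∀ (t : ℝ) (γt : Fin k → ℝ), 0 < t →
      (∀ᵐ ω ∂S.P, S.s (mdot (S.X ω) γt) = t * S.s (mdot (S.X ω) θstar.2)) →
      S.Q (θstar.1, γt) = (A/t + t*B)/2 := by
    intro t γt ht haeq
    show (∫ ω, S.L (θstar.1, γt) ω ∂S.P) = _
    rw [integral_congr_ae (hLeq t γt ht haeq)]
    rw [show (fun ω => ((S.e θstar ω)^2 * S.s (mdot (S.X ω) θstar.2) / t
          + t * S.s (mdot (S.X ω) θstar.2)) / 2)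
        = fun ω => (1/(2*t) : ℝ) * ((S.e θstar ω)^2 * S.s (mdot (S.X ω) θstar.2))
          + (t/2 : ℝ) * S.s (mdot (S.X ω) θstar.2) from funext fun ω => by
            field_simp]
    rw [integral_add (hfint.const_mul _) (hgint.const_mul _), integral_const_mul,
      integral_const_mul, ← hAdef, ← hBdef]
    field_simp
  -- strict comparison along the family
  have hkey : ∀ t : ℝ, 0 < t → t ≠ 1 → (A+B)/2 < (A/t + t*B)/2 := by
    intro t ht ht1
    obtain ⟨γt, haeq, hneγ⟩ := hfam t ht
    have h1 := hmin (θstar.1, γt) (hmemT t γt ht haeq)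
      (fun h => hneγ ht1 (congrArg Prod.snd h))
    rw [hQstar, hQt t γt ht haeq] at h1
    exact h1
  -- A = B
  have hABeq : A = B := by
    by_contra hne
    rcases lt_or_ge 0 B with hBpos | hBle
    · set t := (A+B)/(2*B) with htdef
      have hABpos : 0 < A + B := by linarith
      have ht : 0 < t := div_pos hABpos (by linarith)
      have ht1 : t ≠ 1 := by
        intro h
        rw [htdef, div_eq_one_iff_eq (by positivity)] at h
        exact hne (by linarith)
      have h5 : A / t = 2*A*B/(A+B) := by
        rw [htdef, div_div_eq_mul_div]
        ring_nf
      have h6 : t * B = (A+B)/2 := by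
        rw [htdef]; field_simp
      have hrev : A/t + t*B < A+B := by
        rw [h5, h6]
        have hsq : 0 < (A-B)^2 :=
          lt_of_le_of_ne (sq_nonneg _) (Ne.symm (pow_ne_zero 2 (sub_ne_zero.mpr hne)))
        rw [div_add_div _ _ (ne_of_gt hABpos) (two_ne_zero), div_lt_iff₀ (by positivity)]
        nlinarith [hsq]
      have := hkey t ht ht1
      linarith
    · have hB : B = 0 := le_antisymm hBle hB0
      have hApos : 0 < A := lt_of_le_of_ne hA0 fun h => hne (by rw [← h, hB])
      have h2' := hkey 2 (by norm_num) (by norm_num)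
      rw [hB] at h2'
      norm_num at h2'
      linarith
  refine ⟨?_, ?_, ?_⟩
  · rw [hQstar, hABeq]; ring
  · rw [hQstar, hABeq]; ring
  -- third part: OLS value
  · obtain ⟨hY4, hX4, _⟩ := h3
    have hY2 : Integrable (fun ω => (S.Y ω)^2) S.P := by
      refine (hY4.add (integrable_const 1)).mono'
        ((S.measY.pow_const 2).aestronglyMeasurable) ?_
      filter_upwards with ω
      simp only [Pi.add_apply]
      rw [Real.norm_eq_abs, abs_of_nonneg (sq_nonneg _)]
      nlinarith [sq_nonneg ((S.Y ω)^2 - 1)]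
    have hXsum : Integrable (fun ω => ∑ i, (S.X ω i)^2) S.P := by
      have hmm : Measurable fun ω => ∑ i, (S.X ω i)^2 :=
        Finset.measurable_sum _ fun i _ => ((measurable_pi_apply i).comp S.measX).pow_const 2
      refine (hX4.add (integrable_const 1)).mono' hmm.aestronglyMeasurable ?_
      filter_upwards with ω
      simp only [Pi.add_apply]
      have hnn : 0 ≤ ∑ i, (S.X ω i)^2 := Finset.sum_nonneg fun i _ => sq_nonneg _
      rw [Real.norm_eq_abs, abs_of_nonneg hnn]
      have e1 : ednorm (S.X ω)^2 = ∑ i, (S.X ω i)^2 := Real.sq_sqrt hnn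
      have e2 : ednorm (S.X ω)^4 = (∑ i, (S.X ω i)^2)^2 := by
        rw [show (4:ℕ) = 2*2 from rfl, pow_mul, e1]
      nlinarith [e2, sq_nonneg ((∑ i, (S.X ω i)^2) - 1)]
    have hC_int : Integrable (fun ω => (S.Y ω - mdot (S.X ω) βLS)^2) S.P := by
      have hmm : Measurable fun ω => (S.Y ω - mdot (S.X ω) βLS)^2 :=
        (S.measY.sub (hmX βLS)).pow_const 2
      refine ((hY2.const_mul 2).add
        (hXsum.const_mul (2 * ∑ i, (βLS i)^2))).mono' hmm.aestronglyMeasurable ?_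
      filter_upwards with ω
      simp only [Pi.add_apply]
      rw [Real.norm_eq_abs, abs_of_nonneg (sq_nonneg _)]
      have hcs : (mdot (S.X ω) βLS)^2 ≤ (∑ i, (S.X ω i)^2) * (∑ i, (βLS i)^2) :=
        Finset.sum_mul_sq_le_sq_mul_sq Finset.univ (S.X ω) βLS
      nlinarith [hcs, sq_nonneg (S.Y ω + mdot (S.X ω) βLS)]
    set C := ∫ ω, (S.Y ω - mdot (S.X ω) βLS)^2 ∂S.P with hCdef
    have hC0 : 0 ≤ C := integral_nonneg fun ω => sq_nonneg _
    have hsg : 0 < S.s gLS := hLS.1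
    have hQeq : S.Q (βLS, lsγ gLS) = S.QLS βLS gLS := by
      show (∫ ω, S.L (βLS, lsγ gLS) ω ∂S.P) = ∫ ω, _ ∂S.P
      refine integral_congr_ae ?_
      filter_upwards [S.intercept] with ω h1
      simp only [Setting.L, Setting.e]
      rw [mdot_lsg, h1, one_mul]
    have hQLSval : ∀ g' : ℝ, 0 < S.s g' → S.QLS βLS g' = (C / S.s g' + S.s g')/2 := by
      intro u hu
      show (∫ ω, (1/2) * (((S.Y ω - mdot (S.X ω) βLS)/S.s u)^2 + 1) * S.s u ∂S.P) = _
      rw [show (fun ω => (1/2) * (((S.Y ω - mdot (S.X ω) βLS)/S.s u)^2 + 1) * S.s u)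
          = fun ω => (1/(2 * S.s u)) * (S.Y ω - mdot (S.X ω) βLS)^2 + S.s u / 2 from
          funext fun ω => by field_simp]
      rw [integral_add (hC_int.const_mul _) (integrable_const _), integral_const_mul,
        integral_const, ← hCdef]
      simp [measure_univ]
      ring
    have hhit : ∀ u : ℝ, 0 < u → ∃ g' : ℝ, S.s g' = u := by
      intro u hu; rcases hs with h | h
      · exact ⟨u, h u⟩
      · exact ⟨Real.log u, by rw [h, Real.exp_log hu]⟩
    have hCpos : 0 < C := by
      rcases lt_or_ge 0 C with h | h
      · exact h
      have hC : C = 0 := le_antisymm h hC0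
      obtain ⟨g', hg'⟩ := hhit (S.s gLS/2) (by linarith)
      have h1 := hLS.2 βLS g' (by rw [hg']; linarith)
      rw [hQLSval gLS hsg, hQLSval g' (by rw [hg']; linarith), hC, hg'] at h1
      simp only [zero_div, zero_add] at h1
      linarith
    obtain ⟨g', hg'⟩ := hhit (Real.sqrt C) (Real.sqrt_pos.mpr hCpos)
    have hsq : Real.sqrt C ^ 2 = C := Real.sq_sqrt hC0
    have h1 := hLS.2 βLS g' (by rw [hg']; exact Real.sqrt_pos.mpr hCpos)
    rw [hQLSval gLS hsg, hQLSval g' (by rw [hg']; exact Real.sqrt_pos.mpr hCpos), hg'] at h1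
    rw [Real.div_sqrt] at h1
    have h3' : Real.sqrt C ≤ (C / S.s gLS + S.s gLS)/2 := by
      rw [le_div_iff₀ (by norm_num : (0:ℝ) < 2), ← sub_nonneg]
      have h5 : C / S.s gLS + S.s gLS - Real.sqrt C * 2
          = (C + S.s gLS^2 - 2 * S.s gLS * Real.sqrt C) / S.s gLS := by
        field_simp
      rw [h5]
      refine div_nonneg ?_ hsg.le
      nlinarith [sq_nonneg (S.s gLS - Real.sqrt C), hsq]
    rw [hQeq, hQLSval gLS hsg]
    linarith [h1, h3']
end
end

section
/- Suppose the conditional mean function of Y given X is linear, E[Y|X] = X'β₀ almost surely, and σ(X) := E[(Y−X'β₀)²|X]^{1/2} satisfies P[σ(X) > 0] = 1. Consider the functional MVR criterion Q₀(ψ) := E[(1/2){((Y−X'β₀)/ψ(X))² + 1}·ψ(X)] over the set S = {ψ : ψ measurable, E|ψ(X)| < ∞ and P[ψ(X) > 0] = 1} of admissible conditional standard deviation functions (restricted to those ψ for which Q₀(ψ) is finite). Then the true conditional standard deviation σ is the unique minimizer of Q₀ over S: Q₀(σ) ≤ Q₀(ψ) for all admissible ψ, with equality if and only if ψ(X) =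 σ(X) almost surely. In particular Q₀(σ) = E[σ(X)]. -/
open MeasureTheory Filter

noncomputable section

open MVR MVR.Setting

/-!
Write `e = Y - X'β₀` and `σ² = E[e² | X]`. For an `X`-measurable scale `p > 0`, conditioning on
`X` turns `E[e²/p]` into `E[σ²/p]`; for nonnegative integrands no integrability of the product is
needed, because `e² dP` and `σ² dP` are measures that agree on the σ-algebra of `X`. Pointwise
`σ²/p + p = 2σ + (σ - p)²/p`, so `Q₀(p) = E[σ] + E[(σ - p)²/(2p)]`, which is minimal exactly
when `p = σ` almost surely.
-/

section PullOut

variable {Ω : Type*} {m m0 : MeasurableSpace Ω} {μ : Measure Ω} {f g : Ω → ℝ}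

theorem lintegral_ofReal_condExp_mul (hm : m ≤ m0) [SigmaFinite (μ.trim hm)]
    {F : Ω → ENNReal} (hF : Measurable[m] F) (hg : Integrable g μ) (hg0 : 0 ≤ᵐ[μ] g) :
    ∫⁻ ω, ENNReal.ofReal (μ[g|m] ω) * F ω ∂μ = ∫⁻ ω, ENNReal.ofReal (g ω) * F ω ∂μ := by
  have htrim : (μ.withDensity fun ω => ENNReal.ofReal (μ[g|m] ω)).trim hm =
      (μ.withDensity fun ω => ENNReal.ofReal (g ω)).trim hm := by
    refine @Measure.ext _ m _ _ fun s hs => ?_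
    rw [trim_measurableSet_eq hm hs, trim_measurableSet_eq hm hs, withDensity_apply _ (hm s hs),
      withDensity_apply _ (hm s hs),
      ← ofReal_integral_eq_lintegral_ofReal integrable_condExp.integrableOn
        (ae_restrict_of_ae (condExp_nonneg hg0)),
      ← ofReal_integral_eq_lintegral_ofReal hg.integrableOn (ae_restrict_of_ae hg0),
      setIntegral_condExp hm hg hs]
  have hF' : AEMeasurable F μ := (hF.mono hm le_rfl).aemeasurable
  calc ∫⁻ ω, ENNReal.ofReal (μ[g|m] ω) * F ω ∂μ
      = ∫⁻ ω, F ω ∂(μ.withDensity fun ω => ENNReal.ofReal (μ[g|m] ω)).trim hm := by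
        rw [lintegral_trim hm hF, lintegral_withDensity_eq_lintegral_mul₀
          integrable_condExp.aemeasurable.ennreal_ofReal hF']
        rfl
    _ = ∫⁻ ω, ENNReal.ofReal (g ω) * F ω ∂μ := by
        rw [htrim, lintegral_trim hm hF, lintegral_withDensity_eq_lintegral_mul₀
          hg.aemeasurable.ennreal_ofReal hF']
        rfl

theorem lintegral_ofReal_condExp_mul_of_nonneg (hm : m ≤ m0) [SigmaFinite (μ.trim hm)]
    (hf : StronglyMeasurable[m] f) (hf0 : 0 ≤ᵐ[μ] f) (hg : Integrable g μ) (hg0 : 0 ≤ᵐ[μ] g) :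
    ∫⁻ ω, ENNReal.ofReal (μ[g|m] ω * f ω) ∂μ = ∫⁻ ω, ENNReal.ofReal (g ω * f ω) ∂μ := by
  have hsplit : ∀ h : Ω → ℝ, (fun ω => ENNReal.ofReal (h ω * f ω)) =ᵐ[μ]
      fun ω => ENNReal.ofReal (h ω) * ENNReal.ofReal (f ω) := fun h => by
    filter_upwards [hf0] with ω hω
    exact ENNReal.ofReal_mul' hω
  rw [lintegral_congr_ae (hsplit _), lintegral_congr_ae (hsplit _)]
  exact lintegral_ofReal_condExp_mul hm hf.measurable.ennreal_ofReal hg hg0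

theorem integrable_condExp_mul_iff (hm : m ≤ m0) [SigmaFinite (μ.trim hm)]
    (hf : StronglyMeasurable[m] f) (hf0 : 0 ≤ᵐ[μ] f) (hg : Integrable g μ) (hg0 : 0 ≤ᵐ[μ] g) :
    Integrable (fun ω => μ[g|m] ω * f ω) μ ↔ Integrable (fun ω => g ω * f ω) μ := by
  have hf' : AEStronglyMeasurable f μ := (hf.mono hm).aestronglyMeasurable
  rw [← lintegral_ofReal_ne_top_iff_integrable (f := fun ω => μ[g|m] ω * f ω)
      (integrable_condExp.1.mul hf') ((condExp_nonneg hg0).mul_nonneg hf0),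
    ← lintegral_ofReal_ne_top_iff_integrable (f := fun ω => g ω * f ω)
      (hg.1.mul hf') (hg0.mul_nonneg hf0),
    lintegral_ofReal_condExp_mul_of_nonneg hm hf hf0 hg hg0]

theorem integral_condExp_mul_of_nonneg (hm : m ≤ m0) [SigmaFinite (μ.trim hm)]
    (hf : StronglyMeasurable[m] f) (hf0 : 0 ≤ᵐ[μ] f) (hg : Integrable g μ) (hg0 : 0 ≤ᵐ[μ] g) :
    ∫ ω, μ[g|m] ω * f ω ∂μ = ∫ ω, g ω * f ω ∂μ := by
  have hf' : AEStronglyMeasurable f μ := (hf.mono hm).aestronglyMeasurable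
  rw [integral_eq_lintegral_of_nonneg_ae (f := fun ω => μ[g|m] ω * f ω)
      ((condExp_nonneg hg0).mul_nonneg hf0) (integrable_condExp.1.mul hf'),
    integral_eq_lintegral_of_nonneg_ae (f := fun ω => g ω * f ω)
      (hg0.mul_nonneg hf0) (hg.1.mul hf'),
    lintegral_ofReal_condExp_mul_of_nonneg hm hf hf0 hg hg0]

end PullOut

def mvrLoss (e p : ℝ) : ℝ := 1 / 2 * ((e / p) ^ 2 + 1) * p

theorem mvrLoss_eq (e : ℝ) {p : ℝ} (hp : p ≠ 0) : mvrLoss e p = (e ^ 2 * p⁻¹ + p) / 2 := by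
  unfold mvrLoss
  field_simp

theorem sq_mul_inv_add_eq (s : ℝ) {p : ℝ} (hp : p ≠ 0) :
    s ^ 2 * p⁻¹ + p = 2 * s + (s - p) ^ 2 * p⁻¹ := by
  field_simp
  ring

section MVRLoss

variable {Ω : Type*} {m m0 : MeasurableSpace Ω} {μ : Measure Ω} {e p σ : Ω → ℝ}

theorem integrable_mvrLoss_iff (hm : m ≤ m0) [SigmaFinite (μ.trim hm)]
    (he : Integrable (fun ω => e ω ^ 2) μ) (hp : StronglyMeasurable[m] p)
    (hp0 : ∀ᵐ ω ∂μ, 0 < p ω) (hpint : Integrable p μ) :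
    Integrable (fun ω => mvrLoss (e ω) (p ω)) μ ↔
      Integrable (fun ω => μ[fun ω => e ω ^ 2|m] ω * (p ω)⁻¹) μ := by
  have hL : (fun ω => mvrLoss (e ω) (p ω)) =ᵐ[μ]
      fun ω => (e ω ^ 2 * (p ω)⁻¹ + p ω) * 2⁻¹ := by
    filter_upwards [hp0] with ω hω
    rw [mvrLoss_eq _ hω.ne', div_eq_mul_inv]
  have hpinv : StronglyMeasurable[m] fun ω => (p ω)⁻¹ := hp.measurable.inv.stronglyMeasurable
  rw [integrable_congr hL, integrable_mul_const_iff (isUnit_iff_ne_zero.2 (by norm_num)),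
    integrable_add_iff_integrable_left' hpint,
    ← integrable_condExp_mul_iff hm hpinv (hp0.mono fun ω hω => (inv_pos.2 hω).le) he
      (ae_of_all _ fun ω => sq_nonneg _)]

theorem integral_mvrLoss_eq_integral_condExp (hm : m ≤ m0) [SigmaFinite (μ.trim hm)]
    (he : Integrable (fun ω => e ω ^ 2) μ) (hp : StronglyMeasurable[m] p)
    (hp0 : ∀ᵐ ω ∂μ, 0 < p ω) (hpint : Integrable p μ)
    (hL : Integrable (fun ω => mvrLoss (e ω) (p ω)) μ) :
    ∫ ω, mvrLoss (e ω) (p ω) ∂μ = ∫ ω, (μ[fun ω => e ω ^ 2|m] ω * (p ω)⁻¹ + p ω) / 2 ∂μ := by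
  have hpinv : StronglyMeasurable[m] fun ω => (p ω)⁻¹ := hp.measurable.inv.stronglyMeasurable
  have hinv0 : 0 ≤ᵐ[μ] fun ω => (p ω)⁻¹ := hp0.mono fun ω hω => (inv_pos.2 hω).le
  have he0 : 0 ≤ᵐ[μ] fun ω => e ω ^ 2 := ae_of_all _ fun ω => sq_nonneg _
  have hV : Integrable (fun ω => μ[fun ω => e ω ^ 2|m] ω * (p ω)⁻¹) μ :=
    (integrable_mvrLoss_iff hm he hp hp0 hpint).1 hL
  have he' : Integrable (fun ω => e ω ^ 2 * (p ω)⁻¹) μ :=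
    (integrable_condExp_mul_iff hm hpinv hinv0 he he0).1 hV
  calc ∫ ω, mvrLoss (e ω) (p ω) ∂μ = ∫ ω, (e ω ^ 2 * (p ω)⁻¹ + p ω) / 2 ∂μ :=
        integral_congr_ae (hp0.mono fun ω hω => mvrLoss_eq _ hω.ne')
    _ = ∫ ω, (μ[fun ω => e ω ^ 2|m] ω * (p ω)⁻¹ + p ω) / 2 ∂μ := by
        rw [integral_div, integral_div, integral_add he' hpint, integral_add hV hpint,
          ← integral_condExp_mul_of_nonneg hm hpinv hinv0 he he0]

theorem integral_mvrLoss_eq_integral_add (hm : m ≤ m0) [SigmaFinite (μ.trim hm)]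
    (he : Integrable (fun ω => e ω ^ 2) μ) (hσint : Integrable σ μ)
    (hσsq : (fun ω => σ ω ^ 2) =ᵐ[μ] μ[fun ω => e ω ^ 2|m])
    (hp : StronglyMeasurable[m] p) (hp0 : ∀ᵐ ω ∂μ, 0 < p ω) (hpint : Integrable p μ)
    (hL : Integrable (fun ω => mvrLoss (e ω) (p ω)) μ) :
    Integrable (fun ω => (σ ω - p ω) ^ 2 * (p ω)⁻¹ / 2) μ ∧
      ∫ ω, mvrLoss (e ω) (p ω) ∂μ = ∫ ω, σ ω ∂μ + ∫ ω, (σ ω - p ω) ^ 2 * (p ω)⁻¹ / 2 ∂μ := by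
  have hrisk : (fun ω => (μ[fun ω => e ω ^ 2|m] ω * (p ω)⁻¹ + p ω) / 2) =ᵐ[μ]
      fun ω => σ ω + (σ ω - p ω) ^ 2 * (p ω)⁻¹ / 2 := by
    filter_upwards [hσsq, hp0] with ω hsq hω
    rw [← hsq, sq_mul_inv_add_eq _ hω.ne']
    ring
  have hgap : Integrable (fun ω => (σ ω - p ω) ^ 2 * (p ω)⁻¹ / 2) μ := by
    have hrisk_int := (((integrable_mvrLoss_iff hm he hp hp0 hpint).1 hL).add hpint).div_const 2
    exact ((hrisk_int.congr hrisk).sub hσint).congr (ae_of_all _ fun ω => by simp)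
  refine ⟨hgap, ?_⟩
  rw [integral_mvrLoss_eq_integral_condExp hm he hp hp0 hpint hL, integral_congr_ae hrisk,
    integral_add hσint hgap]

theorem integrable_sq_of_sq_eq_condExp [NeZero μ]
    (hσsq : (fun ω => σ ω ^ 2) =ᵐ[μ] μ[fun ω => e ω ^ 2|m]) (hσpos : ∀ᵐ ω ∂μ, 0 < σ ω) :
    Integrable (fun ω => e ω ^ 2) μ := by
  by_contra h
  rw [condExp_of_not_integrable h] at hσsq
  obtain ⟨ω, hsq, hω⟩ := (hσsq.and hσpos).exists
  exact pow_ne_zero 2 hω.ne' hsq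

theorem integrable_of_sq_eq_condExp [IsFiniteMeasure μ] (hσ : AEStronglyMeasurable σ μ)
    (hσsq : (fun ω => σ ω ^ 2) =ᵐ[μ] μ[fun ω => e ω ^ 2|m]) :
    Integrable σ μ :=
  ((memLp_two_iff_integrable_sq hσ).2
    ((integrable_congr hσsq).2 integrable_condExp)).integrable one_le_two

theorem integral_mvrLoss_of_sq_eq_condExp (hm : m ≤ m0) [SigmaFinite (μ.trim hm)]
    (he : Integrable (fun ω => e ω ^ 2) μ) (hσ : StronglyMeasurable[m] σ) (hσint : Integrable σ μ)
    (hσsq : (fun ω => σ ω ^ 2) =ᵐ[μ] μ[fun ω => e ω ^ 2|m]) (hσpos : ∀ᵐ ω ∂μ, 0 < σ ω) :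
    ∫ ω, mvrLoss (e ω) (σ ω) ∂μ = ∫ ω, σ ω ∂μ := by
  have hVσ : σ =ᵐ[μ] fun ω => μ[fun ω => e ω ^ 2|m] ω * (σ ω)⁻¹ := by
    filter_upwards [hσsq, hσpos] with ω hsq hω
    rw [← hsq, sq, mul_inv_cancel_right₀ hω.ne']
  have hL := (integrable_mvrLoss_iff hm he hσ hσpos hσint).2 (hσint.congr hVσ)
  simp [(integral_mvrLoss_eq_integral_add hm he hσint hσsq hσ hσpos hσint hL).2]

theorem integral_mvrLoss_le_of_sq_eq_condExp (hm : m ≤ m0) [SigmaFinite (μ.trim hm)]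
    (he : Integrable (fun ω => e ω ^ 2) μ) (hσ : StronglyMeasurable[m] σ) (hσint : Integrable σ μ)
    (hσsq : (fun ω => σ ω ^ 2) =ᵐ[μ] μ[fun ω => e ω ^ 2|m]) (hσpos : ∀ᵐ ω ∂μ, 0 < σ ω)
    (hp : StronglyMeasurable[m] p) (hp0 : ∀ᵐ ω ∂μ, 0 < p ω) (hpint : Integrable p μ)
    (hL : Integrable (fun ω => mvrLoss (e ω) (p ω)) μ) :
    ∫ ω, mvrLoss (e ω) (σ ω) ∂μ ≤ ∫ ω, mvrLoss (e ω) (p ω) ∂μ := by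
  rw [integral_mvrLoss_of_sq_eq_condExp hm he hσ hσint hσsq hσpos,
    (integral_mvrLoss_eq_integral_add hm he hσint hσsq hp hp0 hpint hL).2]
  exact le_add_of_nonneg_right (integral_nonneg_of_ae (hp0.mono fun ω hω => by positivity))

theorem integral_mvrLoss_eq_iff_of_sq_eq_condExp (hm : m ≤ m0) [SigmaFinite (μ.trim hm)]
    (he : Integrable (fun ω => e ω ^ 2) μ) (hσ : StronglyMeasurable[m] σ) (hσint : Integrable σ μ)
    (hσsq : (fun ω => σ ω ^ 2) =ᵐ[μ] μ[fun ω => e ω ^ 2|m]) (hσpos : ∀ᵐ ω ∂μ, 0 < σ ω)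
    (hp : StronglyMeasurable[m] p) (hp0 : ∀ᵐ ω ∂μ, 0 < p ω) (hpint : Integrable p μ)
    (hL : Integrable (fun ω => mvrLoss (e ω) (p ω)) μ) :
    ∫ ω, mvrLoss (e ω) (p ω) ∂μ = ∫ ω, mvrLoss (e ω) (σ ω) ∂μ ↔ p =ᵐ[μ] σ := by
  obtain ⟨hgap, hQ⟩ := integral_mvrLoss_eq_integral_add hm he hσint hσsq hp hp0 hpint hL
  rw [hQ, integral_mvrLoss_of_sq_eq_condExp hm he hσ hσint hσsq hσpos, add_eq_left,
    integral_eq_zero_iff_of_nonneg_ae (hp0.mono fun ω hω => by positivity) hgap]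
  refine Filter.eventually_congr (hp0.mono fun ω hω => ?_)
  rw [Pi.zero_apply, eq_comm (b := σ ω)]
  simp [hω.ne', sub_eq_zero]

end MVRLoss

theorem stmt_19_general {k : ℕ} [NeZero k] {Ω : Type*} [MeasurableSpace Ω] (S : MVR.Setting k Ω)
    (β₀ : Fin k → ℝ) (hmean : ∀ᵐ ω ∂S.P, S.condMean ω = mdot (S.X ω) β₀)
    (hσpos : ∀ᵐ ω ∂S.P, 0 < S.condSD ω) :
    (∀ ψ : (Fin k → ℝ) → ℝ, Measurable ψ →
      Integrable (fun ω => ψ (S.X ω)) S.P →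
      (∀ᵐ ω ∂S.P, 0 < ψ (S.X ω)) →
      Integrable (fun ω =>
        (1 / 2) * (((S.Y ω - mdot (S.X ω) β₀) / ψ (S.X ω)) ^ 2 + 1) * ψ (S.X ω)) S.P →
      (∫ ω, (1 / 2) * (((S.Y ω - mdot (S.X ω) β₀) / S.condSD ω) ^ 2 + 1) * S.condSD ω ∂S.P ≤
        ∫ ω, (1 / 2) * (((S.Y ω - mdot (S.X ω) β₀) / ψ (S.X ω)) ^ 2 + 1) * ψ (S.X ω) ∂S.P) ∧
      ((∫ ω, (1 / 2) * (((S.Y ω - mdot (S.X ω) β₀) / ψ (S.X ω)) ^ 2 + 1) * ψ (S.X ω) ∂S.P =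
        ∫ ω, (1 / 2) * (((S.Y ω - mdot (S.X ω) β₀) / S.condSD ω) ^ 2 + 1) * S.condSD ω ∂S.P) ↔
        (fun ω => ψ (S.X ω)) =ᵐ[S.P] S.condSD)) ∧
    (∫ ω, (1 / 2) * (((S.Y ω - mdot (S.X ω) β₀) / S.condSD ω) ^ 2 + 1) * S.condSD ω ∂S.P =
      ∫ ω, S.condSD ω ∂S.P) := by
  have := S.isProb
  have hm : S.mX ≤ ‹MeasurableSpace Ω› := S.measX.comap_le
  have hσ : StronglyMeasurable[S.mX] S.condSD :=
    Real.continuous_sqrt.comp_stronglyMeasurable stronglyMeasurable_condExp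
  have hσsq : (fun ω => S.condSD ω ^ 2) =ᵐ[S.P]
      S.P[fun ω => (S.Y ω - mdot (S.X ω) β₀) ^ 2|S.mX] := by
    have hV : S.condVar =ᵐ[S.P] S.P[fun ω => (S.Y ω - mdot (S.X ω) β₀) ^ 2|S.mX] :=
      condExp_congr_ae (hmean.mono fun ω h => by simp only [h])
    filter_upwards [condExp_nonneg (ae_of_all _ fun ω => sq_nonneg (S.Y ω - S.condMean ω)), hV]
      with ω h0 h
    exact (Real.sq_sqrt h0).trans h
  have he := integrable_sq_of_sq_eq_condExp hσsq hσpos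
  have hσint := integrable_of_sq_eq_condExp (hσ.mono hm).aestronglyMeasurable hσsq
  refine ⟨fun ψ hψ hψint hψpos hL => ?_,
    integral_mvrLoss_of_sq_eq_condExp hm he hσ hσint hσsq hσpos⟩
  have hp : StronglyMeasurable[S.mX] fun ω => ψ (S.X ω) :=
    (hψ.comp (comap_measurable S.X)).stronglyMeasurable
  exact ⟨integral_mvrLoss_le_of_sq_eq_condExp hm he hσ hσint hσsq hσpos hp hψpos hψint hL,
    integral_mvrLoss_eq_iff_of_sq_eq_condExp hm he hσ hσint hσsq hσpos hp hψpos hψint hL⟩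

/-- The functional MVR criterion `Q₀` is uniquely minimized, over admissible conditional
standard deviation functions, by the true conditional standard deviation `σ`, with
`Q₀(σ) = E[σ(X)]`. -/
theorem stmt_19 {k : ℕ} [NeZero k] {Ω : Type*} [MeasurableSpace Ω] (S : MVR.Setting k Ω)
    (hY2 : Integrable (fun ω => (S.Y ω) ^ 2) S.P)
    (β₀ : Fin k → ℝ) (hmean : ∀ᵐ ω ∂S.P, S.condMean ω = mdot (S.X ω) β₀)
    (hσpos : ∀ᵐ ω ∂S.P, 0 < S.condSD ω) :
    (∀ ψ : (Fin k → ℝ) → ℝ, Measurable ψ →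
      Integrable (fun ω => ψ (S.X ω)) S.P →
      (∀ᵐ ω ∂S.P, 0 < ψ (S.X ω)) →
      Integrable (fun ω =>
        (1 / 2) * (((S.Y ω - mdot (S.X ω) β₀) / ψ (S.X ω)) ^ 2 + 1) * ψ (S.X ω)) S.P →
      (∫ ω, (1 / 2) * (((S.Y ω - mdot (S.X ω) β₀) / S.condSD ω) ^ 2 + 1) * S.condSD ω ∂S.P ≤
        ∫ ω, (1 / 2) * (((S.Y ω - mdot (S.X ω) β₀) / ψ (S.X ω)) ^ 2 + 1) * ψ (S.X ω) ∂S.P) ∧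
      ((∫ ω, (1 / 2) * (((S.Y ω - mdot (S.X ω) β₀) / ψ (S.X ω)) ^ 2 + 1) * ψ (S.X ω) ∂S.P =
        ∫ ω, (1 / 2) * (((S.Y ω - mdot (S.X ω) β₀) / S.condSD ω) ^ 2 + 1) * S.condSD ω ∂S.P) ↔
        (fun ω => ψ (S.X ω)) =ᵐ[S.P] S.condSD)) ∧
    (∫ ω, (1 / 2) * (((S.Y ω - mdot (S.X ω) β₀) / S.condSD ω) ^ 2 + 1) * S.condSD ω ∂S.P =
      ∫ ω, S.condSD ω ∂S.P) :=
  stmt_19_general S β₀ hmean hσpos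
end
end
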